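/- The Yatracos class of the family of n-fold products of univariate Gaussians, consisting of all sets {xⁿ ∈ ℝⁿ : p_{m,σ}(xⁿ) > p_{m′,σ′}(xⁿ)} where p_{m,σ} is the n-fold Gaussian density with mean m and variance σ², is a VC class whose VC dimension is bounded by 12 log₂(12e), uniformly in n. -/

import Mathlib

/-!
The Gaussians form an exponential family: `log p_{m,σ}(x)` is a linear combination of the three
features `∑ xᵢ²`, `∑ xᵢ`, `1`. Hence every Yatracos set `{p_{m',σ'} < p_{m,σ}}` is the positivity
set of a vector in a fixed 3-dimensional space of functions, and by Dudley's linear-dependence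
argument such sets shatter at most 3 points; finally `3 ≤ 12 log₂(12e)`.
-/

/-- `n`-th shatter coefficient of a class `𝒞` of subsets of `Z`. -/
noncomputable def shatterCoef {Z : Type*} (𝒞 : Set (Set Z)) (n : ℕ) : ℕ :=
  ⨆ z : Fin n → Z, Set.ncard {f : Fin n → Bool | ∃ A ∈ 𝒞, ∀ i, f i = true ↔ z i ∈ A}

/-- The `n`-fold product Gaussian density with mean `m` and variance `σ²`. -/
noncomputable def gaussDens (n : ℕ) (m σ : ℝ) (x : Fin n → ℝ) : ℝ :=
  (2 * Real.pi * σ ^ 2) ^ (-(n : ℝ) / 2) *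
    Real.exp (-(∑ i, (x i - m) ^ 2) / (2 * σ ^ 2))

/-- The Yatracos class of the family of `n`-fold products of univariate Gaussians:
all sets `{xⁿ : p_{m,σ}(xⁿ) > p_{m′,σ′}(xⁿ)}`. -/
def gaussYatracos (n : ℕ) : Set (Set (Fin n → ℝ)) :=
  {A | ∃ m σ m' σ' : ℝ, 0 < σ ∧ 0 < σ' ∧ (m, σ) ≠ (m', σ') ∧
    A = {x | gaussDens n m' σ' x < gaussDens n m σ x}}

open Matrix

def Shatters {Z : Type*} (𝒞 : Set (Set Z)) {j : ℕ} (z : Fin j → Z) : Prop :=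
  ∀ f : Fin j → Bool, ∃ A ∈ 𝒞, ∀ i, f i = true ↔ z i ∈ A

lemma Shatters.mono {Z : Type*} {𝒞 𝒟 : Set (Set Z)} (h𝒞𝒟 : 𝒞 ⊆ 𝒟) {j : ℕ} {z : Fin j → Z}
    (h : Shatters 𝒞 z) : Shatters 𝒟 z := fun f =>
  let ⟨A, hA, hAf⟩ := h f
  ⟨A, h𝒞𝒟 hA, hAf⟩

lemma exists_shatters_of_shatterCoef_eq {Z : Type*} [Nonempty Z] {𝒞 : Set (Set Z)} {j : ℕ}
    (h : shatterCoef 𝒞 j = 2 ^ j) : ∃ z : Fin j → Z, Shatters 𝒞 z := by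
  by_contra! hnot
  have hlt (z : Fin j → Z) :
      Set.ncard {f : Fin j → Bool | ∃ A ∈ 𝒞, ∀ i, f i = true ↔ z i ∈ A} < 2 ^ j := by
    have hss : {f : Fin j → Bool | ∃ A ∈ 𝒞, ∀ i, f i = true ↔ z i ∈ A} ⊂ Set.univ :=
      Set.ssubset_univ_iff.mpr fun huniv => hnot z (Set.eq_univ_iff_forall.mp huniv)
    simpa [Set.ncard_univ] using Set.ncard_lt_ncard hss Set.finite_univ
  have hle : shatterCoef 𝒞 j ≤ 2 ^ j - 1 := ciSup_le fun z => Nat.le_sub_one_of_lt (hlt z)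
  have hpos : 0 < 2 ^ j := Nat.two_pow_pos j
  omega

def positivitySets {Z ι : Type*} [Fintype ι] (φ : Z → ι → ℝ) : Set (Set Z) :=
  {A | ∃ w : ι → ℝ, A = {z | 0 < w ⬝ᵥ φ z}}

lemma exists_pos_of_not_linearIndependent {ι V : Type*} [Fintype ι] [AddCommGroup V]
    [Module ℝ V] {v : ι → V} (h : ¬ LinearIndependent ℝ v) :
    ∃ γ : ι → ℝ, ∑ i, γ i • v i = 0 ∧ ∃ i, 0 < γ i := by
  obtain ⟨γ, hsum, i, hi⟩ := Fintype.not_linearIndependent_iff.mp h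
  rcases hi.lt_or_gt with hneg | hpos
  · exact ⟨-γ, by simp [neg_smul, hsum], i, neg_pos.mpr hneg⟩
  · exact ⟨γ, hsum, i, hpos⟩

/-- Dudley's argument: a linear dependence `∑ γᵢ φ(zᵢ) = 0` with some `γᵢ > 0` is violated by
the set that picks out exactly the points with `γᵢ > 0`. -/
lemma card_le_of_shatters_positivitySets {Z ι : Type*} [Fintype ι] {φ : Z → ι → ℝ} {j : ℕ}
    {z : Fin j → Z} (h : Shatters (positivitySets φ) z) : j ≤ Fintype.card ι := by
  by_contra! hj
  have hdep : ¬ LinearIndependent ℝ (φ ∘ z) := fun hli => by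
    have := hli.fintype_card_le_finrank
    simp only [Fintype.card_fin, Module.finrank_fintype_fun_eq_card] at this
    omega
  obtain ⟨γ, hsum, i₀, hi₀⟩ := exists_pos_of_not_linearIndependent hdep
  obtain ⟨A, ⟨w, rfl⟩, hA⟩ := h fun i => decide (0 < γ i)
  have hsign (i : Fin j) : 0 < γ i ↔ 0 < w ⬝ᵥ φ (z i) := by simpa using hA i
  have hterm (i : Fin j) : 0 ≤ γ i * (w ⬝ᵥ φ (z i)) := by
    rcases le_or_gt (γ i) 0 with hγ | hγ
    · exact mul_nonneg_of_nonpos_of_nonpos hγ (not_lt.mp fun hw => hγ.not_gt ((hsign i).mpr hw))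
    · exact (mul_pos hγ ((hsign i).mp hγ)).le
  have hzero : ∑ i, γ i * (w ⬝ᵥ φ (z i)) = 0 := by
    simpa [dotProduct_sum, dotProduct_smul] using congrArg (w ⬝ᵥ ·) hsum
  have hpos : 0 < ∑ i, γ i * (w ⬝ᵥ φ (z i)) :=
    Finset.sum_pos' (fun i _ => hterm i) ⟨i₀, Finset.mem_univ _, mul_pos hi₀ ((hsign i₀).mp hi₀)⟩
  exact hpos.ne' hzero

def gaussFeatures {n : ℕ} (x : Fin n → ℝ) : Fin 3 → ℝ := ![∑ i, x i ^ 2, ∑ i, x i, 1]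

/-- The natural parameters of the exponential family `N(m, σ²)^⊗n`, with minus its
log-partition function as the coefficient of the constant feature. -/
noncomputable def gaussNatParams (n : ℕ) (m σ : ℝ) : Fin 3 → ℝ :=
  ![-1 / (2 * σ ^ 2), m / σ ^ 2,
    -(n : ℝ) / 2 * Real.log (2 * Real.pi * σ ^ 2) - n * m ^ 2 / (2 * σ ^ 2)]

lemma gaussDens_pos (n : ℕ) (m : ℝ) {σ : ℝ} (hσ : σ ≠ 0) (x : Fin n → ℝ) :
    0 < gaussDens n m σ x := by
  unfold gaussDens
  positivity

lemma sum_sub_sq {ι : Type*} [Fintype ι] (x : ι → ℝ) (m : ℝ) :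
    ∑ i, (x i - m) ^ 2 = ∑ i, x i ^ 2 - 2 * m * ∑ i, x i + Fintype.card ι * m ^ 2 := by
  simp only [sub_sq, Finset.sum_add_distrib, Finset.sum_sub_distrib, ← Finset.sum_mul,
    ← Finset.mul_sum, Finset.sum_const, Finset.card_univ, nsmul_eq_mul]
  ring

lemma log_gaussDens (n : ℕ) (m : ℝ) {σ : ℝ} (hσ : σ ≠ 0) (x : Fin n → ℝ) :
    Real.log (gaussDens n m σ x) = gaussNatParams n m σ ⬝ᵥ gaussFeatures x := by
  have hσ2 : σ ^ 2 ≠ 0 := pow_ne_zero 2 hσ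
  rw [gaussDens, Real.log_mul (by positivity) (Real.exp_ne_zero _), Real.log_exp,
    Real.log_rpow (by positivity), sum_sub_sq, Fintype.card_fin]
  simp only [gaussNatParams, gaussFeatures, dotProduct, Fin.sum_univ_three, cons_val_zero,
    cons_val_one, cons_val, mul_one]
  field_simp
  ring

lemma gaussYatracos_subset_positivitySets (n : ℕ) :
    gaussYatracos n ⊆ positivitySets (gaussFeatures (n := n)) := by
  rintro A ⟨m, σ, m', σ', hσ, hσ', -, rfl⟩
  refine ⟨gaussNatParams n m σ - gaussNatParams n m' σ', Set.ext fun x => ?_⟩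
  rw [Set.mem_ofPred_eq, Set.mem_ofPred_eq, ← Real.log_lt_log_iff (gaussDens_pos n m' hσ'.ne' x)
    (gaussDens_pos n m hσ.ne' x), log_gaussDens n m hσ.ne', log_gaussDens n m' hσ'.ne',
    sub_dotProduct, sub_pos]

lemma three_le_twelve_mul_logb : (3 : ℝ) ≤ 12 * Real.logb 2 (12 * Real.exp 1) := by
  have h : (1 : ℝ) ≤ Real.logb 2 (12 * Real.exp 1) := by
    rw [Real.le_logb_iff_rpow_le one_lt_two (by positivity), Real.rpow_one]
    linarith [Real.add_one_le_exp 1]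
  linarith

/-- The Yatracos class of `n`-fold Gaussian products is a VC class with VC dimension at
most `12 log₂(12e)`, uniformly in `n`: any `j` that is shattered (`S_j = 2^j`) satisfies
`j ≤ 12 log₂(12e)`. -/
theorem gauss_yatracos_vc_bound (n : ℕ) :
    ∀ j : ℕ, shatterCoef (gaussYatracos n) j = 2 ^ j →
      (j : ℝ) ≤ 12 * Real.logb 2 (12 * Real.exp 1) := by
  intro j hj
  obtain ⟨z, hz⟩ := exists_shatters_of_shatterCoef_eq hj
  have hj3 : j ≤ Fintype.card (Fin 3) :=
    card_le_of_shatters_positivitySets (hz.mono (gaussYatracos_subset_positivitySets n))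
  calc (j : ℝ) ≤ 3 := by simpa using hj3
    _ ≤ _ := three_le_twelve_mul_logb
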